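/- arXiv:1002.1837 — 7 statements merged into one kernel-verified Lean document; each statement's English description precedes it below -/
import Mathlib

section
/- Let L be an invertible n×n complex matrix. There exists a nonzero Hermitian n×n complex matrix H satisfying L H L* = −H (where L* denotes the conjugate transpose) if and only if there exists a complex number λ such that both λ and −1/\overline{λ} are eigenvalues of L. -/
/-!
If `L H Lᴴ = -H` with `H ≠ 0`, then `H Lᴴ = -L⁻¹ H`, so `H` intertwines `Lᴴ` and `-L⁻¹`. Two
matrices `A`, `B` intertwined by a nonzero `H` share an eigenvalue, because
`(charpoly B)(A) H = H (charpoly B)(B) = 0` makes `(charpoly B)(A)` singular. If `μ` is the common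
eigenvalue, then `conj μ` and `-1 / μ` are eigenvalues of `L`. Conversely, if `L v = λ v` and `L w = μ w` with `λ * conj μ = -1`,
the rank-one matrix `v wᴴ` solves `L P Lᴴ = -P`. That equation is `ℂ`-linear and stable under `ᴴ`,
so `c P + (c P)ᴴ` is a Hermitian solution, nonzero for `c = 1` or `c = i`.
-/

open Matrix Polynomial

theorem SemiconjBy.aeval {R A : Type*} [CommSemiring R] [Semiring A] [Algebra R A]
    {a x y : A} (h : SemiconjBy a x y) (p : R[X]) :
    SemiconjBy a (aeval x p) (aeval y p) := by
  induction p using Polynomial.induction_on' with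
  | add p q hp hq => simpa only [map_add] using hp.add_right hq
  | monomial k c =>
    simpa only [aeval_monomial] using
      SemiconjBy.mul_right (Algebra.commutes c a).symm (h.pow_right k)

theorem exists_smul_add_star_smul_ne_zero {A : Type*} [AddCommGroup A] [Module ℂ A]
    [StarAddMonoid A] [StarModule ℂ A] {x : A} (hx : x ≠ 0) :
    ∃ c : ℂ, c • x + star (c • x) ≠ 0 := by
  by_contra! h
  have hre : x + star x = 0 := by simpa using h 1
  have him : Complex.I • (x - star x) = 0 := by
    simpa [star_smul, smul_sub, sub_eq_add_neg] using h Complex.I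
  have hx2 : (2 : ℂ) • x = 0 := by
    rw [smul_eq_zero, or_iff_right Complex.I_ne_zero, sub_eq_zero] at him
    rw [two_smul]
    nth_rw 2 [him]
    exact hre
  exact hx ((smul_eq_zero.mp hx2).resolve_left two_ne_zero)

namespace Matrix

section RankOne

variable {n : Type*} [Fintype n]

theorem mul_vecMulVec_star_mul_conjTranspose {m α : Type*} [CommSemiring α] [StarRing α]
    (L : Matrix m n α) (v w : n → α) :
    L * vecMulVec v (star w) * Lᴴ = vecMulVec (L *ᵥ v) (star (L *ᵥ w)) := by
  rw [mul_vecMulVec, vecMulVec_mul, star_mulVec]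

theorem exists_isHermitian_of_mul_mul_conjTranspose_eq_neg {L P : Matrix n n ℂ} (hP0 : P ≠ 0)
    (hP : L * P * Lᴴ = -P) : ∃ H : Matrix n n ℂ, H ≠ 0 ∧ Hᴴ = H ∧ L * H * Lᴴ = -H := by
  have hstar (X : Matrix n n ℂ) : L * star X * Lᴴ = star (L * X * Lᴴ) := by
    simp only [star_mul, star_eq_conjTranspose, conjTranspose_conjTranspose, mul_assoc]
  obtain ⟨c, hc⟩ := exists_smul_add_star_smul_ne_zero hP0
  refine ⟨c • P + star (c • P), hc, (IsSelfAdjoint.add_star_self _).star_eq, ?_⟩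
  rw [mul_add, add_mul, hstar, mul_smul_comm, smul_mul_assoc, hP, smul_neg, star_neg, neg_add]

end RankOne

section Spectrum

variable {K n : Type*} [Field K] [Fintype n] [DecidableEq n]

theorem exists_mulVec_eq_smul_of_mem_spectrum {A : Matrix n n K} {μ : K}
    (h : μ ∈ spectrum K A) : ∃ v ≠ 0, A *ᵥ v = μ • v := by
  rw [← spectrum_toLin', ← Module.End.hasEigenvalue_iff_mem_spectrum] at h
  obtain ⟨v, hv, hv0⟩ := h.exists_hasEigenvector
  exact ⟨v, hv0, by simpa using Module.End.mem_eigenspace_iff.mp hv⟩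

theorem spectrum_inter_nonempty_of_semiconjBy [IsAlgClosed K] {A B H : Matrix n n K}
    (h : SemiconjBy H B A) (hH : H ≠ 0) : (spectrum K A ∩ spectrum K B).Nonempty := by
  obtain _ | _ := isEmpty_or_nonempty n
  · exact absurd (Subsingleton.elim H 0) hH
  have hA : ¬IsUnit (aeval A B.charpoly) := fun hu => hH <| hu.mul_left_cancel <| by
    rw [← (h.aeval B.charpoly).eq, aeval_self_charpoly, mul_zero, mul_zero]
  have hdeg : 0 < B.charpoly.degree := by
    rw [charpoly_degree_eq_dim]
    exact_mod_cast Fintype.card_pos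
  rw [← spectrum.zero_mem_iff K, spectrum.map_polynomial_aeval_of_degree_pos A _ hdeg] at hA
  obtain ⟨μ, hμA, hμB⟩ := hA
  exact ⟨μ, hμA, mem_spectrum_iff_isRoot_charpoly.mpr hμB⟩

end Spectrum

end Matrix

theorem stmt0_general (n : ℕ) (L : Matrix (Fin n) (Fin n) ℂ) (hL : IsUnit L) :
    (∃ H : Matrix (Fin n) (Fin n) ℂ, H ≠ 0 ∧ Hᴴ = H ∧ L * H * Lᴴ = -H) ↔
      (∃ lam : ℂ, lam ∈ spectrum ℂ L ∧ (-1 / (starRingEnd ℂ lam)) ∈ spectrum ℂ L) := by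
  obtain ⟨u, rfl⟩ := hL
  constructor
  · rintro ⟨H, hH0, -, hLH⟩
    have hsemi : SemiconjBy H (↑u)ᴴ (-↑u⁻¹) :=
      calc H * (↑u)ᴴ = ↑u⁻¹ * (↑u * H * (↑u)ᴴ) := by simp [← mul_assoc]
        _ = -↑u⁻¹ * H := by rw [hLH, mul_neg, neg_mul]
    obtain ⟨μ, hμinv, hμstar⟩ := spectrum_inter_nonempty_of_semiconjBy hsemi hH0
    refine ⟨star μ, ?_, ?_⟩
    · rwa [← star_eq_conjTranspose, spectrum.map_star] at hμstar
    · rw [← spectrum.neg_eq, Set.mem_neg, ← spectrum.inv₀_mem_iff] at hμinv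
      simpa [div_eq_mul_inv] using hμinv
  · rintro ⟨lam, hlam, hlam'⟩
    obtain ⟨v, hv0, hv⟩ := exists_mulVec_eq_smul_of_mem_spectrum hlam
    obtain ⟨w, hw0, hw⟩ := exists_mulVec_eq_smul_of_mem_spectrum hlam'
    have hlam0 : lam ≠ 0 := by
      rintro rfl
      exact spectrum.zero_notMem ℂ u.isUnit hlam
    refine exists_isHermitian_of_mul_mul_conjTranspose_eq_neg
      (vecMulVec_ne_zero hv0 (star_ne_zero.mpr hw0)) ?_
    rw [mul_vecMulVec_star_mul_conjTranspose, hv, hw, star_smul, smul_vecMulVec, vecMulVec_smul,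
      smul_smul]
    convert neg_one_smul ℂ _ using 2
    rw [star_div₀, star_neg, star_one, Complex.star_def, Complex.conj_conj]
    field_simp

/-- For an invertible `n × n` complex matrix `L`, there exists a nonzero
Hermitian matrix `H` with `L * H * Lᴴ = -H` if and only if there is a complex number `λ`
such that both `λ` and `-1/conj λ` are eigenvalues (spectrum elements) of `L`. -/
theorem stmt0 (n : ℕ) (hn : 1 ≤ n) (L : Matrix (Fin n) (Fin n) ℂ) (hL : IsUnit L) :
    (∃ H : Matrix (Fin n) (Fin n) ℂ, H ≠ 0 ∧ Hᴴ = H ∧ L * H * Lᴴ = -H) ↔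
      (∃ lam : ℂ, lam ∈ spectrum ℂ L ∧ (-1 / (starRingEnd ℂ lam)) ∈ spectrum ℂ L) :=
  stmt0_general n L hL
end

section
/- Let A and B be invertible n×n complex matrices and set L = B⁻¹A*. A pair (a,b) of n×n complex matrices satisfies the linearized moment map equations a*A + A*a − Bb* − bB* = 0 and Ba + bA = 0 if and only if there exists an n×n complex matrix h with a = hA, b = −Bh, and L(h + h*)L* + (h + h*) = 0. -/
/-!
Writing `a = hA` (possible since `A` is invertible), the second equation says exactly
`b = -Bh`. Substituting, the first equation becomes `Aᴴ s A + B s Bᴴ = 0` with `s = h + hᴴ`;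
since `Aᴴ = BL`, this is `B (L s Lᴴ + s) Bᴴ = 0`, and `B` is invertible.
-/

open Matrix

theorem add_mul_eq_zero_iff_exists {R : Type*} [Ring R] {A B a b : R} (hA : IsUnit A) :
    B * a + b * A = 0 ↔ ∃ h, a = h * A ∧ b = -(B * h) := by
  constructor
  · intro hab
    obtain ⟨u, rfl⟩ := hA
    refine ⟨a * ↑u⁻¹, by simp, ?_⟩
    rw [← u.mul_left_inj, neg_mul, mul_assoc, mul_assoc, u.inv_mul, mul_one]
    exact eq_neg_of_add_eq_zero_right hab
  · rintro ⟨h, rfl, rfl⟩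
    noncomm_ring

section StarRing

variable {R : Type*} [Ring R] [StarRing R]

theorem star_mul_add_star_mul_sub_mul_star_sub_mul_star (A B h : R) :
    star (h * A) * A + star A * (h * A) - B * star (-(B * h)) - -(B * h) * star B =
      star A * (h + star h) * A + B * (h + star h) * star B := by
  simp only [star_mul, star_neg]
  noncomm_ring

theorem mul_add_mul_star_eq_of_mul_eq_star {A B L : R} (hL : B * L = star A) (s : R) :
    B * (L * s * star L + s) * star B = star A * s * A + B * s * star B := by
  have hA : A = star L * star B := by rw [← star_mul, hL, star_star]
  rw [hA, star_mul, star_star, star_star]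
  noncomm_ring

theorem star_mul_add_mul_star_eq_zero_iff {A B L : R} (hB : IsUnit B) (hL : B * L = star A)
    (s : R) : star A * s * A + B * s * star B = 0 ↔ L * s * star L + s = 0 := by
  rw [← mul_add_mul_star_eq_of_mul_eq_star hL, hB.star.mul_left_eq_zero, hB.mul_right_eq_zero]

theorem linearized_moment_map_eq_zero_iff {A B L a b : R} (hA : IsUnit A) (hB : IsUnit B)
    (hL : B * L = star A) :
    (star a * A + star A * a - B * star b - b * star B = 0 ∧ B * a + b * A = 0) ↔
      ∃ h, a = h * A ∧ b = -(B * h) ∧ L * (h + star h) * star L + (h + star h) = 0 := by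
  rw [add_mul_eq_zero_iff_exists hA]
  constructor
  · rintro ⟨hreal, h, rfl, rfl⟩
    rw [star_mul_add_star_mul_sub_mul_star_sub_mul_star,
      star_mul_add_mul_star_eq_zero_iff hB hL] at hreal
    exact ⟨h, rfl, rfl, hreal⟩
  · rintro ⟨h, rfl, rfl, hs⟩
    rw [star_mul_add_star_mul_sub_mul_star_sub_mul_star,
      star_mul_add_mul_star_eq_zero_iff hB hL]
    exact ⟨hs, h, rfl, rfl⟩

end StarRing

/-- For invertible `A`, `B` and `L = B⁻¹ * Aᴴ`, a pair `(a, b)` lies in the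
kernel of the differential of the hyperkähler moment map at `(A, B)`, i.e. satisfies
`aᴴA + Aᴴa − Bbᴴ − bBᴴ = 0` and `Ba + bA = 0`, if and only if `a = hA`, `b = −Bh` for some
matrix `h` with `L(h + hᴴ)Lᴴ + (h + hᴴ) = 0`. -/
theorem stmt2 (n : ℕ) (A B : Matrix (Fin n) (Fin n) ℂ) (hA : IsUnit A) (hB : IsUnit B)
    (a b : Matrix (Fin n) (Fin n) ℂ) :
    (aᴴ * A + Aᴴ * a - B * bᴴ - b * Bᴴ = 0 ∧ B * a + b * A = 0) ↔
      ∃ h : Matrix (Fin n) (Fin n) ℂ, a = h * A ∧ b = -(B * h) ∧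
        (B⁻¹ * Aᴴ) * (h + hᴴ) * (B⁻¹ * Aᴴ)ᴴ + (h + hᴴ) = 0 :=
  linearized_moment_map_eq_zero_iff hA hB
    (mul_nonsing_inv_cancel_left B Aᴴ ((isUnit_iff_isUnit_det B).mp hB))
end

section
/- The set of pairs (A,B) of n×n complex matrices such that A and B are invertible and the matrix L = B⁻¹A* has no pair of eigenvalues of the form λ and −1/\overline{λ} (for any complex number λ) is dense in the space of all pairs of n×n complex matrices. -/
/-!
Invertible matrices are dense, since `A - z • 1` is invertible for every `z` off the finite
spectrum of `A`. For an invertible pair, replacing `A` by `t • A` with `t` real replaces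
`L = B⁻¹Aᴴ` by `t • L`, and eigenvalues `t a`, `t b` of `t • L` are antipodal exactly when
`t² · conj a · b = -1`. For each of the finitely many pairs `(a, b)` this excludes finitely
many `t`, so `(t • A, B)` is antipode-free for `t` arbitrarily close to `1`.
-/

open Matrix Pointwise Polynomial

lemma finite_setOf_ofReal_sq_mul_eq_neg_one (c : ℂ) :
    {t : ℝ | (t : ℂ) ^ 2 * c = -1}.Finite := by
  have hp : (C c * X ^ 2 + 1 : ℂ[X]) ≠ 0 := fun h => by
    simpa using congrArg (coeff · 0) h
  refine ((finite_setOfPred_isRoot hp).preimage Complex.ofReal_injective.injOn).subset ?_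
  intro t (ht : (t : ℂ) ^ 2 * c = -1)
  simp only [Set.mem_preimage, Set.mem_ofPred_eq, IsRoot.def, eval_add, eval_mul, eval_C,
    eval_pow, eval_X, eval_one]
  linear_combination ht

lemma Set.Finite.finite_setOf_real_smul_antipodal {s : Set ℂ} (hs : s.Finite) (h0 : (0 : ℂ) ∉ s) :
    {t : ℝ | ∃ lam ∈ (t : ℂ) • s, -1 / starRingEnd ℂ lam ∈ (t : ℂ) • s}.Finite := by
  refine (((hs.biUnion fun a _ => hs.biUnion fun b _ =>
    finite_setOf_ofReal_sq_mul_eq_neg_one (starRingEnd ℂ a * b)).insert 0)).subset ?_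
  rintro t ⟨_, ⟨a, ha, rfl⟩, b, hb, hab⟩
  rcases eq_or_ne t 0 with rfl | ht
  · exact Set.mem_insert _ _
  refine Set.mem_insert_of_mem _ (Set.mem_biUnion ha (Set.mem_biUnion hb ?_))
  have hta : starRingEnd ℂ ((t : ℂ) • a) ≠ 0 := by
    simpa [ht] using ne_of_mem_of_not_mem ha h0
  rw [eq_div_iff hta] at hab
  simp only [smul_eq_mul, map_mul, Complex.conj_ofReal] at hab
  show (t : ℂ) ^ 2 * (starRingEnd ℂ a * b) = -1
  linear_combination hab

lemma spectrum_real_smul {A : Type*} [Ring A] [Algebra ℂ A] {t : ℝ} (ht : t ≠ 0) (a : A) :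
    spectrum ℂ ((t : ℂ) • a) = (t : ℂ) • spectrum ℂ a :=
  spectrum.unit_smul_eq_smul a (Units.mk0 (t : ℂ) (Complex.ofReal_ne_zero.mpr ht))

-- `-1 / conj λ` is the antipode of `λ` on the Riemann sphere.
def antipodeFreePairs (n : Type*) [Fintype n] [DecidableEq n] :
    Set (Matrix n n ℂ × Matrix n n ℂ) :=
  {p | IsUnit p.1 ∧ IsUnit p.2 ∧
    ¬∃ lam : ℂ, lam ∈ spectrum ℂ (p.2⁻¹ * p.1ᴴ) ∧
      (-1 / (starRingEnd ℂ lam)) ∈ spectrum ℂ (p.2⁻¹ * p.1ᴴ)}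

variable {n : Type*} [Fintype n] [DecidableEq n]

theorem Matrix.dense_setOf_isUnit : Dense {A : Matrix n n ℂ | IsUnit A} := by
  intro A
  have hcont : Continuous fun z : ℂ => A - algebraMap ℂ (Matrix n n ℂ) z := by fun_prop
  have h0 : (0 : ℂ) ∈ closure (spectrum ℂ A)ᶜ :=
    (A.finite_spectrum.countable.dense_compl ℂ).closure_eq ▸ Set.mem_univ _
  simpa using map_mem_closure hcont h0 fun z hz =>
    neg_sub (algebraMap ℂ _ z) A ▸ (spectrum.notMem_iff.mp hz).neg

lemma real_smul_mem_antipodeFreePairs {A B : Matrix n n ℂ} (hA : IsUnit A) (hB : IsUnit B)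
    {t : ℝ} (ht : t ≠ 0)
    (hfree : ¬∃ lam ∈ (t : ℂ) • spectrum ℂ (B⁻¹ * Aᴴ),
      -1 / starRingEnd ℂ lam ∈ (t : ℂ) • spectrum ℂ (B⁻¹ * Aᴴ)) :
    ((t : ℂ) • A, B) ∈ antipodeFreePairs n := by
  have hL : B⁻¹ * ((t : ℂ) • A)ᴴ = (t : ℂ) • (B⁻¹ * Aᴴ) := by
    rw [conjTranspose_smul, Matrix.mul_smul, Complex.star_def, Complex.conj_ofReal]
  refine ⟨(isUnit_smul_iff (Units.mk0 (t : ℂ) (Complex.ofReal_ne_zero.mpr ht)) A).mpr hA, hB, ?_⟩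
  rwa [hL, spectrum_real_smul ht]

lemma mem_closure_antipodeFreePairs {A B : Matrix n n ℂ} (hA : IsUnit A) (hB : IsUnit B) :
    (A, B) ∈ closure (antipodeFreePairs n) := by
  have h0 : (0 : ℂ) ∉ spectrum ℂ (B⁻¹ * Aᴴ) := spectrum.zero_notMem_iff ℂ |>.mpr <|
    (isUnit_nonsing_inv_iff.mpr hB).mul ((isUnit_conjTranspose _).mpr hA)
  have hbad := ((B⁻¹ * Aᴴ).finite_spectrum.finite_setOf_real_smul_antipodal h0).insert 0
  have h1 : (1 : ℝ) ∈ closure _ := (hbad.countable.dense_compl ℝ).closure_eq ▸ Set.mem_univ 1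
  have hcont : Continuous fun t : ℝ => ((t : ℂ) • A, B) := by fun_prop
  simpa using map_mem_closure hcont h1 fun t ht =>
    real_smul_mem_antipodeFreePairs hA hB (fun h => ht (.inl h)) (fun h => ht (.inr h))

theorem dense_antipodeFreePairs : Dense (antipodeFreePairs n) := by
  have hunits := (dense_setOf_isUnit (n := n)).prod (dense_setOf_isUnit (n := n))
  exact dense_closure.mp <| hunits.mono fun p hp => mem_closure_antipodeFreePairs hp.1 hp.2

/-- The set of pairs `(A, B)` of invertible `n × n` complex matrices such that
`L = B⁻¹Aᴴ` has no pair of eigenvalues of the form `λ`, `−1/conj λ` is dense in the space of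
all pairs of `n × n` complex matrices. -/
theorem stmt4 (n : ℕ) :
    Dense {p : Matrix (Fin n) (Fin n) ℂ × Matrix (Fin n) (Fin n) ℂ |
      IsUnit p.1 ∧ IsUnit p.2 ∧
        ¬∃ lam : ℂ, lam ∈ spectrum ℂ (p.2⁻¹ * p.1ᴴ) ∧
          (-1 / (starRingEnd ℂ lam)) ∈ spectrum ℂ (p.2⁻¹ * p.1ᴴ)} :=
  dense_antipodeFreePairs
end

section
/- Let A and B be invertible n×n complex matrices such that L = B⁻¹A* has no pair of eigenvalues of the form λ and −1/\overline{λ}. Then a pair (a,b) of n×n complex matrices satisfies a*A + A*a − Bb* − bB* = 0 and Ba + bA = 0 if and only if there exists a skew-Hermitian n×n complex matrix u (i.e., u* = −u) with a = uA and b = −Bu. (That is, at such regular points the kernel of the differential of the moment map equals the tangent space to the U(n)_L-orbit.) -/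
/-!
Writing `a = u A`, the second equation forces `b = -B u`, and the first one becomes
`Aᴴ s A + B s Bᴴ = 0` for `s = u + uᴴ`. With `L = B⁻¹ Aᴴ` this reads `L s = s M` where
`M = -(Lᴴ)⁻¹`, whose eigenvalues are the `-1 / conj λ` for `λ` an eigenvalue of `L`. The
regularity assumption makes the spectra of `L` and `M` disjoint, so the Sylvester equation
`L s = s M` only has the solution `s = 0`, i.e. `u` is skew-Hermitian.
-/

open Matrix Polynomial

theorem Polynomial.aeval_mul_eq_mul_aeval {R A : Type*} [CommSemiring R] [Semiring A]
    [Algebra R A] {L M X : A} (h : L * X = X * M) (p : R[X]) : aeval L p * X = X * aeval M p := by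
  have hpow (k : ℕ) : L ^ k * X = X * M ^ k := (SemiconjBy.pow_right h.symm k).symm
  induction p using Polynomial.induction_on' with
  | add p q hp hq => rw [map_add, map_add, add_mul, mul_add, hp, hq]
  | monomial k c =>
    rw [aeval_monomial, aeval_monomial, mul_assoc, hpow, ← mul_assoc, ← mul_assoc,
      Algebra.commutes]

theorem Matrix.eq_zero_of_mul_eq_mul_of_disjoint_spectrum {K n : Type*} [Field K]
    [IsAlgClosed K] [Fintype n] [DecidableEq n] {L M X : Matrix n n K} (h : L * X = X * M)
    (hLM : Disjoint (spectrum K L) (spectrum K M)) : X = 0 := by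
  cases isEmpty_or_nonempty n
  · exact Subsingleton.elim _ _
  have hunit : IsUnit (aeval L M.charpoly) := by
    rw [← spectrum.zero_notMem_iff K,
      spectrum.map_polynomial_aeval_of_degree_pos L _
        (by simp [charpoly_degree_eq_dim, Fintype.card_pos])]
    rintro ⟨μ, hμL, hμM⟩
    exact hLM.notMem_of_mem_left hμL (mem_spectrum_of_isRoot_charpoly hμM)
  have hX : aeval L M.charpoly * X = 0 := by
    rw [aeval_mul_eq_mul_aeval h, aeval_self_charpoly, mul_zero]
  simpa [hunit.mul_right_eq_zero] using hX

theorem spectrum.neg_div_star_mem_of_mem_neg_inv_star {A : Type*} [Ring A] [StarRing A]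
    [Algebra ℂ A] [StarModule ℂ A] {a : Aˣ} {μ : ℂ}
    (hμ : μ ∈ spectrum ℂ (↑(-(star a)⁻¹) : A)) :
    -1 / starRingEnd ℂ μ ∈ spectrum ℂ (a : A) := by
  rw [Units.val_neg, ← spectrum.neg_eq, Set.mem_neg] at hμ
  have hμ0 : -μ ≠ 0 := spectrum.ne_zero_of_mem_of_unit hμ
  rw [← Units.val_mk0 hμ0, spectrum.inv_mem_iff, inv_inv, Units.val_inv_eq_inv_val,
    Units.val_mk0, Units.coe_star, spectrum.map_star, Set.mem_star] at hμ
  simpa [neg_div, one_div] using hμ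

theorem Matrix.eq_zero_of_conjTranspose_mul_mul_add_mul_mul_conjTranspose_eq_zero {n : Type*}
    [Fintype n] [DecidableEq n] {A B s : Matrix n n ℂ} (hA : IsUnit A) (hB : IsUnit B)
    (hreg : ¬∃ lam : ℂ, lam ∈ spectrum ℂ (B⁻¹ * Aᴴ) ∧
      (-1 / (starRingEnd ℂ lam)) ∈ spectrum ℂ (B⁻¹ * Aᴴ))
    (h : Aᴴ * s * A + B * s * Bᴴ = 0) : s = 0 := by
  have := hA.invertible
  have := hB.invertible
  set L : (Matrix n n ℂ)ˣ := hB.unit⁻¹ * star hA.unit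
  have hL : (L : Matrix n n ℂ) = B⁻¹ * Aᴴ := by
    simp [L, coe_units_inv, Units.coe_star, star_eq_conjTranspose]
  have hM : (↑(-(star L)⁻¹) : Matrix n n ℂ) = -(Bᴴ * A⁻¹) := by
    rw [Units.val_neg, Units.inv_eq_of_mul_eq_one_right]
    rw [Units.coe_star, hL, star_eq_conjTranspose, conjTranspose_mul, conjTranspose_nonsing_inv,
      conjTranspose_conjTranspose]
    simp [mul_assoc]
  refine eq_zero_of_mul_eq_mul_of_disjoint_spectrum (L := L) (M := ↑(-(star L)⁻¹)) ?_ ?_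
  · rw [hL, hM]
    calc B⁻¹ * Aᴴ * s = B⁻¹ * (Aᴴ * s * A) * A⁻¹ := by simp [mul_assoc]
      _ = B⁻¹ * -(B * s * Bᴴ) * A⁻¹ := by rw [eq_neg_of_add_eq_zero_left h]
      _ = s * -(Bᴴ * A⁻¹) := by simp [mul_assoc, inv_mul_cancel_left_of_invertible]
  · rw [Set.disjoint_left]
    intro μ hμL hμM
    exact hreg ⟨μ, hL ▸ hμL, hL ▸ spectrum.neg_div_star_mem_of_mem_neg_inv_star hμM⟩

theorem Matrix.conjTranspose_mul_add_sub_mul_conjTranspose_of_orbit {n : Type*} [Fintype n]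
    (A B u : Matrix n n ℂ) :
    (u * A)ᴴ * A + Aᴴ * (u * A) - B * (-(B * u))ᴴ - -(B * u) * Bᴴ =
      Aᴴ * (u + uᴴ) * A + B * (u + uᴴ) * Bᴴ := by
  simp only [conjTranspose_mul, conjTranspose_neg]
  noncomm_ring

/-- If `A`, `B` are invertible and `L = B⁻¹Aᴴ` has no pair of eigenvalues of the
form `λ`, `−1/conj λ`, then `(a, b)` lies in the kernel of the differential of the moment map
at `(A, B)` if and only if `a = uA`, `b = −Bu` for some skew-Hermitian `u`. -/
theorem stmt5 (n : ℕ) (A B : Matrix (Fin n) (Fin n) ℂ) (hA : IsUnit A) (hB : IsUnit B)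
    (hreg : ¬∃ lam : ℂ, lam ∈ spectrum ℂ (B⁻¹ * Aᴴ) ∧
      (-1 / (starRingEnd ℂ lam)) ∈ spectrum ℂ (B⁻¹ * Aᴴ))
    (a b : Matrix (Fin n) (Fin n) ℂ) :
    (aᴴ * A + Aᴴ * a - B * bᴴ - b * Bᴴ = 0 ∧ B * a + b * A = 0) ↔
      ∃ u : Matrix (Fin n) (Fin n) ℂ, uᴴ = -u ∧ a = u * A ∧ b = -(B * u) := by
  constructor
  · rintro ⟨hker, hmul⟩
    obtain ⟨u, rfl⟩ : ∃ u, a = u * A :=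
      ⟨a * A⁻¹, (nonsing_inv_mul_cancel_right A a ((isUnit_iff_isUnit_det A).mp hA)).symm⟩
    obtain rfl : b = -(B * u) := hA.mul_left_injective <| by
      simpa [mul_assoc, eq_neg_iff_add_eq_zero, add_comm] using hmul
    rw [conjTranspose_mul_add_sub_mul_conjTranspose_of_orbit] at hker
    have hu := eq_zero_of_conjTranspose_mul_mul_add_mul_mul_conjTranspose_eq_zero hA hB hreg hker
    exact ⟨u, eq_neg_of_add_eq_zero_right hu, rfl, rfl⟩
  · rintro ⟨u, hu, rfl, rfl⟩
    refine ⟨?_, by noncomm_ring⟩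
    rw [conjTranspose_mul_add_sub_mul_conjTranspose_of_orbit, hu, add_neg_cancel]
    simp
end

section
/- There exist two pairs (A₁,B₁) and (A₂,B₂) of 2×2 complex matrices, each satisfying Aᵢ*Aᵢ = BᵢBᵢ* and BᵢAᵢ = diag(1,−1), such that there is no unitary 2×2 matrix u with A₁ = uA₂ and B₁ = B₂u*. (That is, the fibre of the hyperkähler moment map over the value (0, diag(1,−1)) consists of more than one U(2)_L-orbit.) -/
/-!
The left `U(2)`-action preserves the Gram matrix `Aᴴ A`. The point `(1, diag(1, -1))` has Gram
matrix `1`, while the fibre also contains `(!![1, 1; 1/2, -1/2], !![1/2, 1; -1/2, 1])`, whose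
`A` has non-orthogonal columns.
-/

open Matrix

theorem conjTranspose_mul_self_unitary_mul {m n R : Type*} [Fintype m] [DecidableEq m]
    [Semiring R] [StarRing R] {u : Matrix m m R} (hu : uᴴ * u = 1) (A : Matrix m n R) :
    (u * A)ᴴ * (u * A) = Aᴴ * A := by
  rw [conjTranspose_mul, Matrix.mul_assoc, ← Matrix.mul_assoc uᴴ, hu, Matrix.one_mul]

theorem conjTranspose_fin_two {R : Type*} [Star R] (a b c d : R) :
    !![a, b; c, d]ᴴ = !![star a, star c; star b, star d] := by
  ext i j; fin_cases i <;> fin_cases j <;> rfl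

/-- There are two points `(A₁, B₁)`, `(A₂, B₂)` in the fibre of the hyperkähler
moment map over `(0, diag(1, −1))` (i.e. with `Aᵢᴴ Aᵢ = Bᵢ Bᵢᴴ` and `Bᵢ Aᵢ = diag(1, −1)`)
which are not related by the left action of any unitary matrix `u`, `(A, B) ↦ (uA, Buᴴ)`. -/
theorem stmt8 : ∃ A₁ B₁ A₂ B₂ : Matrix (Fin 2) (Fin 2) ℂ,
    (A₁ᴴ * A₁ = B₁ * B₁ᴴ ∧ B₁ * A₁ = !![(1 : ℂ), 0; 0, -1]) ∧
    (A₂ᴴ * A₂ = B₂ * B₂ᴴ ∧ B₂ * A₂ = !![(1 : ℂ), 0; 0, -1]) ∧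
    ¬∃ u : Matrix (Fin 2) (Fin 2) ℂ, uᴴ * u = 1 ∧ A₁ = u * A₂ ∧ B₁ = B₂ * uᴴ := by
  refine ⟨1, !![1, 0; 0, -1], !![1, 1; 1/2, -1/2], !![1/2, 1; -1/2, 1], ?_, ?_, ?_⟩
  · constructor <;> simp [one_fin_two, conjTranspose_fin_two]
  · constructor <;> norm_num [conjTranspose_fin_two]
  · rintro ⟨u, hu, hA, -⟩
    have gram : !![(1 : ℂ), 1; 1/2, -1/2]ᴴ * !![1, 1; 1/2, -1/2] = 1 := by
      rw [← conjTranspose_mul_self_unitary_mul hu, ← hA, conjTranspose_one, Matrix.one_mul]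
    have off_diagonal := congrFun (congrFun gram 0) 1
    norm_num [conjTranspose_fin_two] at off_diagonal
end

section
/- Let P be a positive semidefinite Hermitian n×n complex matrix. There exists a unitary n×n matrix W with PWP = 0 if and only if 2·rank(P) ≤ n. -/
open Matrix
open scoped ComplexOrder

/-
Sylvester's inequality applied to `P * (W * P) = 0` gives `2 rank P ≤ n` for invertible `W`.
Conversely, diagonalize `P = U D U*` with `U` unitary. Since at most half of the eigenvalues are
nonzero, some permutation `σ` sends every index of a nonzero eigenvalue to one of a zero
eigenvalue, so `D V D = 0` for the permutation matrix `V` of `σ`, and `W = U V U*` works.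
-/

open Finset in
theorem Finset.exists_perm_mapsTo_compl {α : Type*} [Fintype α] [DecidableEq α] (s : Finset α)
    (hs : 2 * #s ≤ Fintype.card α) : ∃ σ : Equiv.Perm α, Set.MapsTo σ s ↑sᶜ := by
  obtain ⟨t, hts, ht⟩ := exists_subset_card_eq (s := sᶜ) (n := #s) (by rw [card_compl]; omega)
  let e : {x // x ∈ s} ≃ {x // x ∈ t} := equivOfCardEq ht.symm
  exact ⟨e.extendSubtype, fun x hx => hts (e.extendSubtype_mem x hx)⟩

namespace Matrix

variable {n : Type*} [Fintype n] [DecidableEq n]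

lemma permMatrix_mem_unitaryGroup {R : Type*} [CommRing R] [StarRing R] (σ : Equiv.Perm n) :
    σ.permMatrix R ∈ unitaryGroup n R := by
  rw [mem_unitaryGroup_iff', star_eq_conjTranspose, conjTranspose_permMatrix, ← permMatrix_mul,
    mul_inv_cancel, permMatrix_one]

lemma diagonal_mul_permMatrix_mul_diagonal_eq_zero {R : Type*} [Semiring R] {d : n → R}
    {σ : Equiv.Perm n} (h : ∀ i, d i * d (σ i) = 0) :
    diagonal d * σ.permMatrix R * diagonal d = 0 := by
  ext i j
  rw [mul_diagonal, diagonal_mul]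
  by_cases hij : σ i = j
  · subst hij
    simp [h]
  · simp [PEquiv.toMatrix_apply, hij]

lemma two_mul_rank_le_of_mul_mul_eq_zero {R : Type*} [Field R] {A W : Matrix n n R}
    (hW : IsUnit W.det) (h : A * W * A = 0) : 2 * A.rank ≤ Fintype.card n := by
  have hsylvester := rank_add_rank_le_card_of_mul_eq_zero h
  rw [rank_mul_eq_left_of_isUnit_det W A hW] at hsylvester
  omega

lemma IsHermitian.exists_unitary_mul_mul_eq_zero {𝕜 : Type*} [RCLike 𝕜] {A : Matrix n n 𝕜}
    (hA : A.IsHermitian) (h : 2 * A.rank ≤ Fintype.card n) :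
    ∃ W ∈ unitaryGroup n 𝕜, A * W * A = 0 := by
  let d := hA.eigenvalues
  obtain ⟨σ, hσ⟩ := Finset.exists_perm_mapsTo_compl {i | d i ≠ 0}
    (by rwa [hA.rank_eq_card_non_zero_eigs, Fintype.card_subtype] at h)
  have hd : ∀ i, (RCLike.ofReal ∘ d) i * (RCLike.ofReal ∘ d) (σ i) = (0 : 𝕜) := by
    intro i
    by_cases hi : d i = 0
    · simp [hi]
    · have : d (σ i) = 0 := by simpa using hσ (by simpa using hi)
      simp [this]
  let U := hA.eigenvectorUnitary
  let conjU := Unitary.conjStarAlgAut 𝕜 _ U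
  let D : Matrix n n 𝕜 := diagonal (RCLike.ofReal ∘ d)
  have hspec : A = conjU D := hA.spectral_theorem
  refine ⟨conjU (σ.permMatrix 𝕜), ?_, ?_⟩
  · exact mul_mem (mul_mem U.2 (permMatrix_mem_unitaryGroup σ)) (Unitary.star_mem U.2)
  · calc A * conjU (σ.permMatrix 𝕜) * A = conjU (D * σ.permMatrix 𝕜 * D) := by
          rw [map_mul, map_mul, ← hspec]
      _ = 0 := by rw [diagonal_mul_permMatrix_mul_diagonal_eq_zero hd, map_zero]

end Matrix

/-- For a positive semidefinite Hermitian matrix `P`, there is a unitary `W` with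
`P W P = 0` if and only if `2 · rank P ≤ n`. -/
theorem stmt9 (n : ℕ) (P : Matrix (Fin n) (Fin n) ℂ) (hP : P.PosSemidef) :
    (∃ W : Matrix (Fin n) (Fin n) ℂ, Wᴴ * W = 1 ∧ P * W * P = 0) ↔ 2 * P.rank ≤ n := by
  constructor
  · rintro ⟨W, hW, hPWP⟩
    simpa using two_mul_rank_le_of_mul_mul_eq_zero (isUnit_det_of_left_inverse hW) hPWP
  · intro h
    obtain ⟨W, hW, hPWP⟩ := hP.isHermitian.exists_unitary_mul_mul_eq_zero (by simpa using h)
    exact ⟨W, mem_unitaryGroup_iff'.mp hW, hPWP⟩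
end

section
/- Let (A₁,B₁) and (A₂,B₂) be pairs of n×n complex matrices with Aᵢ*Aᵢ = BᵢBᵢ* and BᵢAᵢ = 0 for i = 1,2, and suppose A₁*A₁ = A₂*A₂. Then there exists a unitary n×n matrix u with A₁ = uA₂ and B₁ = B₂u*. (Hence the quotient of the fibre φ⁻¹(0,0) by the left unitary action is identified with the set of nonnegative Hermitian matrices of rank at most n/2, via (A,B) ↦ the nonnegative square root of A*A.) -/
/-!
Stack each pair into the block matrix `[A | Bᴴ]`. Its Gram matrix has blocks `AᴴA`, `(BA)ᴴ`,
`BA`, `BBᴴ`, which on the fibre `AᴴA = BBᴴ`, `BA = 0` is `diag(AᴴA, AᴴA)`. So the two stacked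
matrices have equal Gram matrices, hence `‖X v‖ = ‖Y v‖` for all `v`; the map `Y v ↦ X v` is
then a well-defined isometry of the range of `Y`, which extends to a unitary `u` with `X = u Y`.
Reading off the two blocks of `X = u Y` gives `A₁ = u A₂` and `B₁ᴴ = u B₂ᴴ`.
-/

open Matrix

namespace LinearMap
variable {𝕜 E V : Type*} [RCLike 𝕜] [AddCommGroup E] [Module 𝕜 E]
  [NormedAddCommGroup V] [InnerProductSpace 𝕜 V] [FiniteDimensional 𝕜 V]

theorem exists_linearIsometry_comp_eq_of_norm_eq {f g : E →ₗ[𝕜] V} (h : ∀ x, ‖f x‖ = ‖g x‖) :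
    ∃ U : V →ₗᵢ[𝕜] V, U.toLinearMap ∘ₗ g = f := by
  have hker : ker g ≤ ker f := fun x hx => by
    rw [mem_ker] at hx ⊢
    rw [← norm_eq_zero, h, hx, norm_zero]
  -- `f ∘ g⁻¹` on `range g`, well defined because `ker g ≤ ker f`
  let L : range g →ₗ[𝕜] V := (ker g).liftQ f hker ∘ₗ g.quotKerEquivRange.symm.toLinearMap
  have hL (x : E) : L ⟨g x, mem_range_self g x⟩ = f x := by
    have : g.quotKerEquivRange.symm ⟨g x, mem_range_self g x⟩ = (ker g).mkQ x := by
      rw [LinearEquiv.symm_apply_eq]; rfl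
    simp only [L, comp_apply, LinearEquiv.coe_coe, this, Submodule.mkQ_apply,
      Submodule.liftQ_apply]
  let Li : range g →ₗᵢ[𝕜] V := ⟨L, by rintro ⟨_, x, rfl⟩; rw [hL, h, Submodule.coe_norm]⟩
  refine ⟨Li.extend, LinearMap.ext fun x => ?_⟩
  rw [comp_apply, LinearIsometry.coe_toLinearMap, Li.extend_apply ⟨g x, mem_range_self g x⟩]
  exact hL x

end LinearMap

namespace Matrix

theorem conjTranspose_mul_self_fromCols_conjTranspose {α m n : Type*} [CommSemiring α] [StarRing α]
    [Fintype m] [Fintype n] (A : Matrix m n α) (B : Matrix n m α) :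
    (fromCols A Bᴴ)ᴴ * fromCols A Bᴴ = fromBlocks (Aᴴ * A) (B * A)ᴴ (B * A) (B * Bᴴ) := by
  rw [conjTranspose_fromCols_eq_fromRows_conjTranspose, fromRows_mul_fromCols,
    conjTranspose_conjTranspose, conjTranspose_mul]

variable {𝕜 l m : Type*} [RCLike 𝕜] [Fintype l] [DecidableEq l] [Fintype m] [DecidableEq m]

theorem norm_toEuclideanLin_eq_of_conjTranspose_mul_self_eq {X Y : Matrix l m 𝕜}
    (h : Xᴴ * X = Yᴴ * Y) (x : EuclideanSpace 𝕜 m) :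
    ‖toEuclideanLin X x‖ = ‖toEuclideanLin Y x‖ := by
  have inner_eq (Z : Matrix l m 𝕜) :
      inner 𝕜 (toEuclideanLin Z x) (toEuclideanLin Z x) =
        inner 𝕜 x (toEuclideanLin (Zᴴ * Z) x) := by
    rw [toLpLin_mul_same, toEuclideanLin_conjTranspose_eq_adjoint, LinearMap.comp_apply,
      LinearMap.adjoint_inner_right]
  have := congrArg RCLike.re ((inner_eq X).trans (h ▸ (inner_eq Y).symm))
  simpa [inner_self_eq_norm_sq] using this

theorem toEuclideanLin_symm_mem_unitaryGroup (U : EuclideanSpace 𝕜 l →ₗᵢ[𝕜] EuclideanSpace 𝕜 l) :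
    toEuclideanLin.symm U.toLinearMap ∈ unitaryGroup l 𝕜 := by
  rw [toEuclideanLin_eq_toLin_orthonormal, toLin_symm]
  exact (U.toLinearIsometryEquiv rfl).toMatrix_mem_unitaryGroup (EuclideanSpace.basisFun l 𝕜) _

theorem exists_mem_unitaryGroup_eq_mul_of_conjTranspose_mul_self_eq {X Y : Matrix l m 𝕜}
    (h : Xᴴ * X = Yᴴ * Y) : ∃ u ∈ unitaryGroup l 𝕜, X = u * Y := by
  obtain ⟨U, hU⟩ := LinearMap.exists_linearIsometry_comp_eq_of_norm_eq
    (norm_toEuclideanLin_eq_of_conjTranspose_mul_self_eq h)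
  refine ⟨toEuclideanLin.symm U.toLinearMap, toEuclideanLin_symm_mem_unitaryGroup U, ?_⟩
  apply toEuclideanLin.injective
  rw [toLpLin_mul_same, LinearEquiv.apply_symm_apply, hU]

end Matrix

/-- If `(A₁, B₁)` and `(A₂, B₂)` both lie in the fibre of the hyperkähler moment
map over `(0, 0)` (i.e. `Aᵢᴴ Aᵢ = Bᵢ Bᵢᴴ` and `Bᵢ Aᵢ = 0`) and `A₁ᴴ A₁ = A₂ᴴ A₂`, then they
are related by the left unitary action `(A, B) ↦ (uA, Buᴴ)`. -/
theorem stmt11 (n : ℕ) (A₁ B₁ A₂ B₂ : Matrix (Fin n) (Fin n) ℂ)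
    (h1 : A₁ᴴ * A₁ = B₁ * B₁ᴴ) (h1' : B₁ * A₁ = 0)
    (h2 : A₂ᴴ * A₂ = B₂ * B₂ᴴ) (h2' : B₂ * A₂ = 0)
    (hAA : A₁ᴴ * A₁ = A₂ᴴ * A₂) :
    ∃ u : Matrix (Fin n) (Fin n) ℂ, uᴴ * u = 1 ∧ A₁ = u * A₂ ∧ B₁ = B₂ * uᴴ := by
  have gram_eq :
      (fromCols A₁ B₁ᴴ)ᴴ * fromCols A₁ B₁ᴴ = (fromCols A₂ B₂ᴴ)ᴴ * fromCols A₂ B₂ᴴ := by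
    simp only [conjTranspose_mul_self_fromCols_conjTranspose, h1', h2', ← h1, ← h2, hAA]
  obtain ⟨u, hu, hAB⟩ := exists_mem_unitaryGroup_eq_mul_of_conjTranspose_mul_self_eq gram_eq
  rw [mul_fromCols, fromCols_ext_iff] at hAB
  refine ⟨u, (mem_unitaryGroup_iff').mp hu, hAB.1, ?_⟩
  simpa using congrArg conjTranspose hAB.2
end
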